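/- (Purification of representable densities.) For every positive integer k, the k-convex hull of the set of pure-state representable densities of the original theory equals the set of pure-state representable densities of the k-convexified theory: conv_k(ι*(P)) = ῑ*(P̄). In particular, for k = dim H, the set of ensemble-state representable densities ι*(E) of the original theory equals the set of pure-state representable densities of the convexified theory. -/

import Mathlib

open Filter Topology

noncomputable section

variable {V H : Type*}
  [AddCommGroup V] [Module ℝ V]
  [NormedAddCommGroup H] [InnerProductSpace ℂ H]

/-- The real expectation value `⟨ψ, T ψ⟩` of an operator `T` in the vector `ψ`. -/
def expectation (T : H →ₗ[ℂ] H) (ψ : H) : ℝ := (inner ℂ ψ (T ψ) : ℂ).re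

/-- The ground state energy of the Hamiltonian `ι v + W`. -/
def energy (ι : V →ₗ[ℝ] (H →ₗ[ℂ] H)) (W : H →ₗ[ℂ] H) (v : V) : ℝ :=
  sInf {r : ℝ | ∃ ψ : H, ‖ψ‖ = 1 ∧ r = expectation (ι v + W) ψ}

/-- The density `ι*(|ψ⟩⟨ψ|)` of the pure state given by the unit vector `ψ`,
as an element of the dual space `V*`. -/
def pureDensity (ι : V →ₗ[ℝ] (H →ₗ[ℂ] H)) (ψ : H) : Module.Dual ℝ V where
  toFun v := expectation (ι v) ψ
  map_add' v w := by simp [expectation, inner_add_right]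
  map_smul' c v := by
    simp only [map_smul, LinearMap.smul_apply, expectation, RingHom.id_apply, smul_eq_mul]
    rw [← algebraMap_smul ℂ c ((ι v) ψ), Complex.coe_algebraMap, inner_smul_right]
    simp

/-- An ensemble state: a positive semidefinite operator of unit trace. -/
def IsEnsembleState (Γ : H →ₗ[ℂ] H) : Prop :=
  Γ.IsSymmetric ∧ (∀ x : H, 0 ≤ (inner ℂ x (Γ x) : ℂ).re) ∧ LinearMap.trace ℂ H Γ = 1

/-- The density `ι*(Γ)` of a state `Γ`, `v ↦ Tr(Γ ι(v))`, as an element of `V*`. -/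
def traceDensity (ι : V →ₗ[ℝ] (H →ₗ[ℂ] H)) (Γ : H →ₗ[ℂ] H) : Module.Dual ℝ V where
  toFun v := (LinearMap.trace ℂ H (ι v ∘ₗ Γ)).re
  map_add' v w := by simp [map_add, LinearMap.add_comp]
  map_smul' c v := by
    simp only [map_smul, RingHom.id_apply, smul_eq_mul]
    rw [← algebraMap_smul ℂ c (ι v), LinearMap.smul_comp, map_smul, Complex.coe_algebraMap]
    simp

/-- The pure (Levy–Lieb) universal functional `F_p`. -/
def Fp (ι : V →ₗ[ℝ] (H →ₗ[ℂ] H)) (W : H →ₗ[ℂ] H) (ρ : Module.Dual ℝ V) : ℝ :=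
  sInf {r : ℝ | ∃ ψ : H, ‖ψ‖ = 1 ∧ pureDensity ι ψ = ρ ∧ r = expectation W ψ}

/-- The ensemble (Lieb/Valone) universal functional `F_e`. -/
def Fe (ι : V →ₗ[ℝ] (H →ₗ[ℂ] H)) (W : H →ₗ[ℂ] H) (ρ : Module.Dual ℝ V) : ℝ :=
  sInf {r : ℝ | ∃ Γ : H →ₗ[ℂ] H, IsEnsembleState Γ ∧ traceDensity ι Γ = ρ ∧
    r = (LinearMap.trace ℂ H (W ∘ₗ Γ)).re}

/-- The weight space of a functional `α ∈ V*`. -/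
def weightSpace (ι : V →ₗ[ℝ] (H →ₗ[ℂ] H)) (α : Module.Dual ℝ V) : Submodule ℂ H where
  carrier := {ψ : H | ∀ v : V, ι v ψ = (α v : ℂ) • ψ}
  add_mem' := by
    intro a b ha hb v
    rw [map_add, ha v, hb v, smul_add]
  zero_mem' := by intro v; simp
  smul_mem' := by
    intro c x hx v
    rw [LinearMap.map_smul, hx v, smul_comm]

/-- The set of weights of an abelian functional theory. -/
def weights (ι : V →ₗ[ℝ] (H →ₗ[ℂ] H)) : Set (Module.Dual ℝ V) :=
  {α : Module.Dual ℝ V | weightSpace ι α ≠ ⊥}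

/-- The derivative of the density map along the set of pure states at `|Ψ⟩⟨Ψ|`,
applied to the tangent vector `φ ⊥ Ψ`: the functional `v ↦ 2 Re⟨φ, ι(v)Ψ⟩`. -/
def derivDensity (ι : V →ₗ[ℝ] (H →ₗ[ℂ] H)) (Ψ φ : H) : Module.Dual ℝ V where
  toFun v := 2 * (inner ℂ φ (ι v Ψ) : ℂ).re
  map_add' v w := by simp [inner_add_right]; ring
  map_smul' c v := by
    simp only [map_smul, LinearMap.smul_apply, RingHom.id_apply, smul_eq_mul]
    rw [← algebraMap_smul ℂ c ((ι v) Ψ), Complex.coe_algebraMap, inner_smul_right]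
    simp; ring

/-- `ρ` is a relative interior point of the convex set `C` (i.e. an interior point
of `C` within its affine span): every point of `C` lies on a segment inside `C`
having `ρ` in its (open) interior. -/
def IsRelInterior {M : Type*} [AddCommGroup M] [Module ℝ M] (C : Set M) (ρ : M) : Prop :=
  ρ ∈ C ∧ ∀ σ ∈ C, ∃ τ ∈ C, ∃ t : ℝ, 0 < t ∧ t < 1 ∧ ρ = t • σ + (1 - t) • τ

/-- Strong orthogonality: componentwise orthogonality in every weight space. -/
def StronglyOrthogonal [FiniteDimensional ℂ H] (ι : V →ₗ[ℝ] (H →ₗ[ℂ] H)) (Φ Φ' : H) : Prop :=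
  ∀ α : Module.Dual ℝ V, weightSpace ι α ≠ ⊥ →
    (inner ℂ (Submodule.orthogonalProjection (weightSpace ι α) Φ)
        (Submodule.orthogonalProjection (weightSpace ι α) Φ') : ℂ) = 0

/-- The `k`-convex hull of a set. -/
def convk {M : Type*} [AddCommGroup M] [Module ℝ M] (k : ℕ) (X : Set M) : Set M :=
  {ρ : M | ∃ (t : Fin k → ℝ) (x : Fin k → M),
    (∀ i, 0 ≤ t i) ∧ (∑ i, t i) = 1 ∧ (∀ i, x i ∈ X) ∧ (∑ i, t i • x i) = ρ}

/-- The operator `A ⊗ id` on `H ⊗ ℂᵏ ≅ H ⊕ ⋯ ⊕ H` (k summands). -/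
def opBar (k : ℕ) (A : H →ₗ[ℂ] H) :
    (PiLp 2 fun _ : Fin k => H) →ₗ[ℂ] (PiLp 2 fun _ : Fin k => H) where
  toFun x := WithLp.toLp 2 (fun i => A (x i))
  map_add' x y := by ext i; simp [PiLp.add_apply]
  map_smul' c x := by ext i; simp [PiLp.smul_apply]

/-- The potential map `v ↦ ι(v) ⊗ id` of the `k`-convexified functional theory. -/
def potBar (k : ℕ) (ι : V →ₗ[ℝ] (H →ₗ[ℂ] H)) :
    V →ₗ[ℝ] ((PiLp 2 fun _ : Fin k => H) →ₗ[ℂ] (PiLp 2 fun _ : Fin k => H)) where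
  toFun v := opBar k (ι v)
  map_add' v w := by
    apply LinearMap.ext; intro x; ext i
    simp [opBar, map_add]
  map_smul' c v := by
    apply LinearMap.ext; intro x; ext i
    simp [opBar, map_smul]

/-- The subspace of potentials mapped to real multiples of the identity operator. -/
def scalarPart (ι : V →ₗ[ℝ] (H →ₗ[ℂ] H)) : Submodule ℝ V where
  carrier := {v : V | ∃ c : ℝ, ι v = c • (LinearMap.id : H →ₗ[ℂ] H)}
  add_mem' := by
    rintro a b ⟨c, hc⟩ ⟨d, hd⟩
    exact ⟨c + d, by rw [map_add, hc, hd, add_smul]⟩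
  zero_mem' := ⟨0, by simp⟩
  smul_mem' := by
    rintro a v ⟨c, hc⟩
    exact ⟨a * c, by rw [map_smul, hc, smul_smul]⟩

/-!
A unit vector `Ψ = (Ψ₁, …, Ψₖ)` of `H ⊗ ℂᵏ ≅ Hᵏ` has density `Σ ι*(Ψᵢ)`, and
`ι*(Ψᵢ) = ‖Ψᵢ‖² ι*(Ψᵢ / ‖Ψᵢ‖)` with `Σ ‖Ψᵢ‖² = 1`: this is a `k`-convex combination of pure
densities, and every such combination `Σ tᵢ ι*(ψᵢ)` arises from `Ψᵢ = √tᵢ ψᵢ`. For `k = dim H`,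
the spectral decomposition writes an ensemble state as a convex combination of `dim H` pure states,
and conversely `Σ tᵢ |ψᵢ⟩⟨ψᵢ|` is an ensemble state with density `Σ tᵢ ι*(ψᵢ)`.
-/

def pureDensities (ι : V →ₗ[ℝ] (H →ₗ[ℂ] H)) : Set (Module.Dual ℝ V) :=
  {σ | ∃ ψ : H, ‖ψ‖ = 1 ∧ pureDensity ι ψ = σ}

def ensembleDensities (ι : V →ₗ[ℝ] (H →ₗ[ℂ] H)) : Set (Module.Dual ℝ V) :=
  {σ | ∃ Γ : H →ₗ[ℂ] H, IsEnsembleState Γ ∧ traceDensity ι Γ = σ}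

theorem mem_convk_of_mem_of_ne_zero {M : Type*} [AddCommGroup M] [Module ℝ M] {k : ℕ}
    {X : Set M} {t : Fin k → ℝ} {x : Fin k → M} (ht : ∀ i, 0 ≤ t i) (hsum : ∑ i, t i = 1)
    (hx : ∀ i, t i ≠ 0 → x i ∈ X) : ∑ i, t i • x i ∈ convk k X := by
  obtain ⟨i₀, -, hi₀⟩ := Finset.exists_ne_zero_of_sum_ne_zero (hsum ▸ one_ne_zero)
  refine ⟨t, fun i => if t i = 0 then x i₀ else x i, ht, hsum, fun i => ?_, ?_⟩
  · dsimp only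
    split_ifs with h
    · exact hx i₀ hi₀
    · exact hx i h
  · refine Finset.sum_congr rfl fun i _ => ?_
    dsimp only
    split_ifs with h <;> simp [h]

theorem isEnsembleState_iff {Γ : H →ₗ[ℂ] H} :
    IsEnsembleState Γ ↔ Γ.IsPositive ∧ LinearMap.trace ℂ H Γ = 1 := by
  refine ⟨fun ⟨hsymm, hpos, htr⟩ => ⟨⟨hsymm, fun x => ?_⟩, htr⟩,
    fun ⟨hpos, htr⟩ => ⟨hpos.isSymmetric, hpos.re_inner_nonneg_right, htr⟩⟩
  rw [hsymm]
  exact hpos x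

section Densities

variable (ι : V →ₗ[ℝ] (H →ₗ[ℂ] H))

theorem pureDensity_smul (c : ℂ) (ψ : H) :
    pureDensity ι (c • ψ) = ‖c‖ ^ 2 • pureDensity ι ψ := by
  ext v
  simp only [pureDensity, expectation, LinearMap.coe_mk, AddHom.coe_mk, LinearMap.smul_apply,
    map_smul, inner_smul_left, inner_smul_right, ← mul_assoc, RCLike.mul_conj, smul_eq_mul]
  exact_mod_cast Complex.re_ofReal_mul _ _

theorem norm_sq_smul_pureDensity_normalize (ψ : H) :
    ‖ψ‖ ^ 2 • pureDensity ι ((‖ψ‖⁻¹ : ℂ) • ψ) = pureDensity ι ψ := by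
  rcases eq_or_ne ψ 0 with rfl | hψ
  · simpa using (pureDensity_smul ι 0 (0 : H)).symm
  rw [pureDensity_smul, smul_smul, norm_inv, Complex.norm_real, norm_norm, ← mul_pow,
    mul_inv_cancel₀ (norm_ne_zero_iff.mpr hψ), one_pow, one_smul]

theorem pureDensity_potBar {k : ℕ} (Ψ : PiLp 2 fun _ : Fin k => H) :
    pureDensity (potBar k ι) Ψ = ∑ i, pureDensity ι (Ψ i) := by
  ext v
  rw [LinearMap.sum_apply]
  simp only [pureDensity, expectation, LinearMap.coe_mk, AddHom.coe_mk, PiLp.inner_apply,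
    Complex.re_sum]
  rfl

theorem convk_pureDensities (k : ℕ) : convk k (pureDensities ι) = pureDensities (potBar k ι) := by
  ext σ
  constructor
  · rintro ⟨t, x, ht, hsum, hx, rfl⟩
    choose ψ hψ_norm hψ using hx
    let Ψ : PiLp 2 fun _ : Fin k => H := WithLp.toLp 2 fun i => (√(t i) : ℂ) • ψ i
    have hΨ_comp (i : Fin k) : ‖(√(t i) : ℂ)‖ ^ 2 = t i := by
      rw [Complex.norm_real, Real.norm_of_nonneg (Real.sqrt_nonneg _), Real.sq_sqrt (ht i)]
    refine ⟨Ψ, ?_, ?_⟩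
    · rw [← pow_eq_one_iff_of_nonneg (norm_nonneg _) two_ne_zero, PiLp.norm_sq_eq_of_L2, ← hsum]
      refine Finset.sum_congr rfl fun i _ => ?_
      rw [PiLp.toLp_apply, norm_smul, mul_pow, hψ_norm, one_pow, mul_one, hΨ_comp]
    · rw [pureDensity_potBar]
      refine Finset.sum_congr rfl fun i _ => ?_
      rw [PiLp.toLp_apply, pureDensity_smul, hΨ_comp, hψ]
  · rintro ⟨Ψ, hΨ, rfl⟩
    rw [pureDensity_potBar]
    simp_rw [← norm_sq_smul_pureDensity_normalize ι (Ψ _)]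
    refine mem_convk_of_mem_of_ne_zero (fun _ => sq_nonneg _) ?_ fun i hi => ⟨_, ?_, rfl⟩
    · rw [← PiLp.norm_sq_eq_of_L2, hΨ, one_pow]
    · exact norm_smul_inv_norm (norm_ne_zero_iff.mp (pow_ne_zero_iff two_ne_zero |>.mp hi))

theorem traceDensity_sum_ofReal_smul {k : ℕ} (t : Fin k → ℝ) (Γ : Fin k → H →ₗ[ℂ] H) :
    traceDensity ι (∑ i, (t i : ℂ) • Γ i) = ∑ i, t i • traceDensity ι (Γ i) := by
  ext v
  simp [traceDensity, ← Module.End.mul_eq_comp, Finset.mul_sum, Complex.re_sum]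

variable [FiniteDimensional ℂ H]

theorem traceDensity_rankOne (ψ : H) :
    traceDensity ι (InnerProductSpace.rankOne ℂ ψ ψ : H →ₗ[ℂ] H) = pureDensity ι ψ := by
  have hcomp (v : V) : ι v ∘ₗ (InnerProductSpace.rankOne ℂ ψ ψ : H →ₗ[ℂ] H) =
      InnerProductSpace.rankOne ℂ (ι v ψ) ψ :=
    LinearMap.ext fun x => by simp
  ext v
  simp only [traceDensity, LinearMap.coe_mk, AddHom.coe_mk, hcomp, InnerProductSpace.trace_rankOne]
  rfl

theorem traceDensity_eq_sum_eigenvalues_smul {Γ : H →ₗ[ℂ] H} (hΓ : Γ.IsSymmetric) :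
    traceDensity ι Γ =
      ∑ i, hΓ.eigenvalues rfl i • pureDensity ι (hΓ.eigenvectorBasis rfl i) := by
  ext v
  simp only [traceDensity, pureDensity, expectation, LinearMap.coe_mk, AddHom.coe_mk,
    LinearMap.trace_eq_sum_inner _ (hΓ.eigenvectorBasis rfl), LinearMap.comp_apply,
    hΓ.apply_eigenvectorBasis, map_smul, inner_smul_right, LinearMap.sum_apply,
    LinearMap.smul_apply, Complex.re_sum, smul_eq_mul]
  exact Finset.sum_congr rfl fun i _ => Complex.re_ofReal_mul _ _

theorem ensembleDensities_eq_convk :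
    ensembleDensities ι = convk (Module.finrank ℂ H) (pureDensities ι) := by
  ext σ
  constructor
  · rintro ⟨Γ, hΓ, rfl⟩
    obtain ⟨hpos, htr⟩ := isEnsembleState_iff.mp hΓ
    let b := hpos.isSymmetric.eigenvectorBasis rfl
    refine ⟨hpos.isSymmetric.eigenvalues rfl, fun i => pureDensity ι (b i),
      hpos.nonneg_eigenvalues rfl, ?_, fun i => ⟨b i, b.orthonormal.1 i, rfl⟩,
      (traceDensity_eq_sum_eigenvalues_smul ι hpos.isSymmetric).symm⟩
    rw [← hpos.isSymmetric.re_trace_eq_sum_eigenvalues, htr, RCLike.one_re]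
  · rintro ⟨t, x, ht, hsum, hx, rfl⟩
    choose ψ hψ_norm hψ using hx
    refine ⟨∑ i, (t i : ℂ) • (InnerProductSpace.rankOne ℂ (ψ i) (ψ i) : H →ₗ[ℂ] H),
      isEnsembleState_iff.mpr ⟨?_, ?_⟩, ?_⟩
    · exact LinearMap.isPositive_sum _ fun i _ =>
        (InnerProductSpace.isPositive_rankOne_self (ψ i)).toLinearMap.smul_of_nonneg
          (Complex.zero_le_real.mpr (ht i))
    · simp only [map_sum, map_smul, InnerProductSpace.trace_rankOne, inner_self_eq_norm_sq_to_K,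
        hψ_norm, smul_eq_mul]
      norm_num
      exact_mod_cast hsum
    · simp_rw [traceDensity_sum_ofReal_smul, traceDensity_rankOne, hψ]

end Densities

theorem purification_representability_general [FiniteDimensional ℂ H]
    (ι : V →ₗ[ℝ] (H →ₗ[ℂ] H)) :
    (∀ k : ℕ, 0 < k →
      convk k {σ : Module.Dual ℝ V | ∃ ψ : H, ‖ψ‖ = 1 ∧ pureDensity ι ψ = σ}
        = {σ : Module.Dual ℝ V |
            ∃ Ψ : PiLp 2 fun _ : Fin k => H, ‖Ψ‖ = 1 ∧ pureDensity (potBar k ι) Ψ = σ}) ∧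
    ({σ : Module.Dual ℝ V | ∃ Γ : H →ₗ[ℂ] H, IsEnsembleState Γ ∧ traceDensity ι Γ = σ}
      = {σ : Module.Dual ℝ V |
          ∃ Ψ : PiLp 2 fun _ : Fin (Module.finrank ℂ H) => H, ‖Ψ‖ = 1 ∧
            pureDensity (potBar (Module.finrank ℂ H) ι) Ψ = σ}) :=
  ⟨fun k _ => convk_pureDensities ι k,
    (ensembleDensities_eq_convk ι).trans (convk_pureDensities ι _)⟩

/-- purification of representable densities. -/
theorem purification_representability [FiniteDimensional ℝ V] [FiniteDimensional ℂ H]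
    [Nontrivial H]
    (ι : V →ₗ[ℝ] (H →ₗ[ℂ] H)) (W : H →ₗ[ℂ] H)
    (hι : ∀ v : V, (ι v).IsSymmetric) (hW : W.IsSymmetric) :
    (∀ k : ℕ, 0 < k →
      convk k {σ : Module.Dual ℝ V | ∃ ψ : H, ‖ψ‖ = 1 ∧ pureDensity ι ψ = σ}
        = {σ : Module.Dual ℝ V |
            ∃ Ψ : PiLp 2 fun _ : Fin k => H, ‖Ψ‖ = 1 ∧ pureDensity (potBar k ι) Ψ = σ}) ∧
    ({σ : Module.Dual ℝ V | ∃ Γ : H →ₗ[ℂ] H, IsEnsembleState Γ ∧ traceDensity ι Γ = σ}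
      = {σ : Module.Dual ℝ V |
          ∃ Ψ : PiLp 2 fun _ : Fin (Module.finrank ℂ H) => H, ‖Ψ‖ = 1 ∧
            pureDensity (potBar (Module.finrank ℂ H) ι) Ψ = σ}) :=
  purification_representability_general ι

end
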